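/- arXiv:1910.01674 — 3 statements merged into one kernel-verified Lean document; each statement's English description precedes it below -/
import Mathlib

section
/- Let S be a polynomial ring over a field and let x, y, z, w be variables (or more generally, elements forming a regular sequence). Then the colon ideal ((x,y)^2 : (xz + yw)) equals (x, y). -/
open MvPolynomial

/-- In `S = k[x,y,z,w]`, the colon ideal `((x,y)^2 : (xz+yw))` equals `(x,y)`. -/
theorem stmt_1 {k : Type*} [Field k]
    (x y z w : MvPolynomial (Fin 4) k)
    (hx : x = X 0) (hy : y = X 1) (hz : z = X 2) (hw : w = X 3) :
    (Ideal.span {x, y} ^ 2).colon (Ideal.span {x * z + y * w}) = Ideal.span {x, y} := by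
  subst hx hy hz hw
  -- Step 1: (x,y)^2 is the monomial ideal (x², xy, yx, y²)
  set e : Fin 4 → (Fin 4 →₀ ℕ) := fun i => Finsupp.single i 1 with he
  have hXmon : ∀ i j : Fin 4, (X i : MvPolynomial (Fin 4) k) * X j = monomial (e i + e j) 1 := by
    intro i j
    rw [X, X, monomial_mul, one_mul]
  have hsq : (Ideal.span {(X 0 : MvPolynomial (Fin 4) k), X 1}) ^ 2
      = Ideal.span ((fun s => monomial s (1 : k)) ''
          {e 0 + e 0, e 0 + e 1, e 1 + e 0, e 1 + e 1}) := by
    rw [pow_two, Ideal.span_mul_span']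
    congr 1
    ext p
    simp only [Set.mem_mul, Set.mem_image, Set.mem_insert_iff, Set.mem_singleton_iff]
    constructor
    · rintro ⟨a, (rfl | rfl), b, (rfl | rfl), rfl⟩ <;>
        [exact ⟨e 0 + e 0, Or.inl rfl, (hXmon 0 0).symm⟩;
         exact ⟨e 0 + e 1, Or.inr (Or.inl rfl), (hXmon 0 1).symm⟩;
         exact ⟨e 1 + e 0, Or.inr (Or.inr (Or.inl rfl)), (hXmon 1 0).symm⟩;
         exact ⟨e 1 + e 1, Or.inr (Or.inr (Or.inr rfl)), (hXmon 1 1).symm⟩]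
    · rintro ⟨s, (rfl | rfl | rfl | rfl), rfl⟩ <;>
        [exact ⟨X 0, Or.inl rfl, X 0, Or.inl rfl, hXmon 0 0⟩;
         exact ⟨X 0, Or.inl rfl, X 1, Or.inr rfl, hXmon 0 1⟩;
         exact ⟨X 1, Or.inr rfl, X 0, Or.inl rfl, hXmon 1 0⟩;
         exact ⟨X 1, Or.inr rfl, X 1, Or.inr rfl, hXmon 1 1⟩]
  ext g
  rw [Ideal.mem_colon_span_singleton]
  constructor
  · -- hard direction
    intro h
    have hXim : ({(X 0 : MvPolynomial (Fin 4) k), X 1} : Set _) = X '' {0, 1} := by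
      simp [Set.image_insert_eq]
    rw [hXim, mem_ideal_span_X_image]
    intro m hm
    by_contra hc
    push_neg at hc
    have hm0 : m 0 = 0 := hc 0 (Or.inl rfl)
    have hm1 : m 1 = 0 := hc 1 (Or.inr rfl)
    rw [hsq, mem_ideal_span_monomial_image] at h
    set u : Fin 4 →₀ ℕ := m + (e 0 + e 2) with hu
    have hu0 : u 0 = 1 := by simp [hu, he, hm0, Finsupp.single_apply]
    have hu1 : u 1 = 0 := by simp [hu, he, hm1, Finsupp.single_apply]
    have hcoeff : coeff u (g * (X 0 * X 2 + X 1 * X 3)) = coeff m g := by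
      rw [mul_add, hXmon 0 2, hXmon 1 3, coeff_add,
        coeff_mul_monomial', coeff_mul_monomial']
      have h1 : e 0 + e 2 ≤ u := le_add_self
      have h2 : ¬ (e 1 + e 3 ≤ u) := by
        intro hle
        have := (Finsupp.le_def.mp hle) 1
        simp [he, hu1, Finsupp.single_apply] at this
      rw [if_pos h1, if_neg h2, add_zero, mul_one]
      congr 1
      simp [hu]
    have husup : u ∈ (g * (X 0 * X 2 + X 1 * X 3)).support := by
      rw [mem_support_iff, hcoeff]
      exact mem_support_iff.mp hm
    obtain ⟨s, hs, hle⟩ := h u husup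
    have h0 := (Finsupp.le_def.mp hle) 0
    have h1 := (Finsupp.le_def.mp hle) 1
    rcases hs with rfl | rfl | rfl | rfl <;>
      simp [he, hu0, hu1, Finsupp.single_apply] at h0 h1
  · -- easy direction
    intro hg
    have hf : (X 0 : MvPolynomial (Fin 4) k) * X 2 + X 1 * X 3
        ∈ Ideal.span {(X 0 : MvPolynomial (Fin 4) k), X 1} := by
      apply Ideal.add_mem
      · exact Ideal.mul_mem_right _ _ (Ideal.subset_span (Or.inl rfl))
      · exact Ideal.mul_mem_right _ _ (Ideal.subset_span (Or.inr rfl))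
    rw [pow_two]
    exact Ideal.mul_mem_mul hg hf
end

section
/- Let S be a polynomial ring over a field, and let a_1, ..., a_{g-2}, x be linearly independent linear forms. Then (a_1 x, ..., a_{g-2} x, x^2) = (x) ∩ (a_1, ..., a_{g-2}, x^2). -/
open MvPolynomial

/-! Linearly independent linear forms are part of a system of coordinates, so after a linear
change of variables `x` and the `a i` are distinct variables and `x` is a nonzerodivisor modulo
`J = (a 1, …, a m)`. Then `g x ∈ J + (x²)`, say `g x = i + d x²` with `i ∈ J`, gives
`x (g - d x) ∈ J`, hence `g - d x ∈ J` and `g x = (g - d x) x + d x² ∈ J (x) + (x²)`. -/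

namespace MvPolynomial

variable {R σ : Type*}

theorem mem_of_X_mul_mem_span_X_image [CommSemiring R] {s : Set σ} {j : σ} (hj : j ∉ s)
    {q : MvPolynomial σ R} (h : X j * q ∈ Ideal.span (X '' s)) : q ∈ Ideal.span (X '' s) := by
  rw [mem_ideal_span_X_image] at h ⊢
  intro d hd
  obtain ⟨i, his, hi⟩ := h (Finsupp.single j 1 + d) <| by
    rw [support_X_mul]; exact Finset.mem_map_of_mem _ hd
  have hij : j ≠ i := fun hji => hj (hji ▸ his)
  exact ⟨i, his, by simpa [Finsupp.single_apply, hij] using hi⟩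

section LinearSubst

variable [CommSemiring R] [Fintype σ]

-- Columns rather than rows, so that composition is matrix multiplication (`linearSubst_comp`).
noncomputable def linearSubst (M : Matrix σ σ R) :
    MvPolynomial σ R →ₐ[R] MvPolynomial σ R :=
  aeval fun j => ∑ i, M i j • X i

theorem linearSubst_X (M : Matrix σ σ R) (j : σ) : linearSubst M (X j) = ∑ i, M i j • X i :=
  aeval_X _ _

theorem linearSubst_comp (M N : Matrix σ σ R) :
    (linearSubst M).comp (linearSubst N) = linearSubst (M * N) := by
  refine algHom_ext fun j => ?_
  simp only [AlgHom.comp_apply, linearSubst_X, map_sum, map_smul, Finset.smul_sum, smul_smul,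
    Matrix.mul_apply, Finset.sum_smul]
  exact Finset.sum_comm.trans (by simp only [mul_comm])

theorem linearSubst_one [DecidableEq σ] : linearSubst (1 : Matrix σ σ R) = AlgHom.id R _ :=
  algHom_ext fun j => by simp [linearSubst_X, Matrix.one_apply]

noncomputable def linearSubstEquiv [DecidableEq σ] (M : Matrix σ σ R) [Invertible M] :
    MvPolynomial σ R ≃ₐ[R] MvPolynomial σ R :=
  AlgEquiv.ofAlgHom (linearSubst M) (linearSubst ⅟M)
    (by rw [linearSubst_comp, mul_invOf_self, linearSubst_one])
    (by rw [linearSubst_comp, invOf_mul_self, linearSubst_one])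

theorem linearSubstEquiv_X [DecidableEq σ] (M : Matrix σ σ R) [Invertible M] (j : σ) :
    linearSubstEquiv M (X j) = ∑ i, M i j • X i :=
  linearSubst_X M j

end LinearSubst

theorem exists_algEquiv_X_eq_of_linearIndependent {k ι : Type*} [Field k] [Fintype σ]
    {b : ι → MvPolynomial σ k} (hb : ∀ i, (b i).IsHomogeneous 1)
    (hind : LinearIndependent k b) :
    ∃ (E : MvPolynomial σ k ≃ₐ[k] MvPolynomial σ k) (j : ι → σ),
      Function.Injective j ∧ ∀ i, E (X (j i)) = b i := by
  classical
  have hspan (i : ι) : b i ∈ Submodule.span k (Set.range X) := by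
    rw [← homogeneousSubmodule_one_eq_span_X]; exact hb i
  choose v hv using fun i => (Submodule.mem_span_range_iff_exists_fun k).1 (hspan i)
  have hvb : Fintype.linearCombination k X ∘ v = b := by
    ext1 i; simp [Fintype.linearCombination_apply, hv]
  have hvind : LinearIndependent k v := .of_comp _ (hvb ▸ hind)
  have hvrange : LinearIndepOn k id (Set.range v) :=
    (linearIndepOn_id_range_iff hvind.injective).2 hvind
  let B₀ := Module.Basis.extend hvrange
  let e := B₀.indexEquiv (Pi.basisFun k σ)
  let B := B₀.reindex e
  let j (i : ι) : σ := e ⟨v i, hvrange.subset_extend _ ⟨i, rfl⟩⟩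
  have hBj (i : ι) : B (j i) = v i := by simp [B, j, B₀]
  let := (Pi.basisFun k σ).invertibleToMatrix B
  refine ⟨linearSubstEquiv ((Pi.basisFun k σ).toMatrix B), j, ?_, fun i => ?_⟩
  · exact fun i₁ i₂ h => hvind.injective (congrArg Subtype.val (e.injective h))
  · simp [linearSubstEquiv_X, Module.Basis.toMatrix_apply, hBj, ← hv]

theorem mem_span_of_mul_mem_of_linearIndependent_cons {k : Type*} [Field k] [Fintype σ] {m : ℕ}
    {x : MvPolynomial σ k} {a : Fin m → MvPolynomial σ k}
    (hx : x.IsHomogeneous 1) (ha : ∀ i, (a i).IsHomogeneous 1)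
    (hind : LinearIndependent k (Fin.cons x a : Fin (m + 1) → MvPolynomial σ k))
    {p : MvPolynomial σ k} (h : x * p ∈ Ideal.span (Set.range a)) :
    p ∈ Ideal.span (Set.range a) := by
  obtain ⟨E, j, hj, hE⟩ := exists_algEquiv_X_eq_of_linearIndependent (Fin.cases hx ha) hind
  have hxE : E.toRingEquiv (X (j 0)) = x := hE 0
  have hspan : Ideal.span (Set.range a) =
      (Ideal.span (X '' Set.range (j ∘ Fin.succ))).map E.toRingEquiv := by
    rw [Ideal.map_span, ← Set.range_comp, ← Set.range_comp]
    congr 2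
    ext1 i
    exact (hE i.succ).symm
  have hj0 : j 0 ∉ Set.range (j ∘ Fin.succ) := fun ⟨i, hi⟩ => Fin.succ_ne_zero i (hj hi)
  rw [hspan, ← E.toRingEquiv.apply_symm_apply p, ← hxE, ← map_mul,
    Ideal.apply_mem_of_equiv_iff] at h
  rw [hspan, ← E.toRingEquiv.apply_symm_apply p, Ideal.apply_mem_of_equiv_iff]
  exact mem_of_X_mul_mem_span_X_image hj0 h

end MvPolynomial

theorem Ideal.span_singleton_inf_sup_span_singleton_sq {R : Type*} [CommRing R] {I : Ideal R}
    {x : R} (hx : ∀ p, x * p ∈ I → p ∈ I) :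
    span {x} ⊓ (I ⊔ span {x ^ 2}) = I * span {x} ⊔ span {x ^ 2} := by
  refine le_antisymm (fun f hf => ?_) ?_
  · obtain ⟨hfx, hf⟩ := Submodule.mem_inf.1 hf
    obtain ⟨g, rfl⟩ := mem_span_singleton'.1 hfx
    obtain ⟨i, hi, r, hr, hir⟩ := Submodule.mem_sup.1 hf
    obtain ⟨d, rfl⟩ := mem_span_singleton'.1 hr
    have hgd : g - d * x ∈ I := hx _ (by convert hi using 1; linear_combination -hir)
    rw [show g * x = (g - d * x) * x + d * x ^ 2 by ring]
    exact add_mem (mem_sup_left (mul_mem_mul hgd (mem_span_singleton_self x)))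
      (mem_sup_right (mul_mem_left _ _ (mem_span_singleton_self _)))
  · exact sup_le (le_inf mul_le_right (le_sup_of_le_left mul_le_left))
      (le_inf (span_singleton_le_span_singleton.2 (dvd_pow_self x two_ne_zero)) le_sup_right)

/-- if `a_1, …, a_m, x` are linearly independent linear forms in a polynomial
ring over a field (here `m = g - 2`), then `(a_1 x, …, a_m x, x^2) = (x) ∩ (a_1, …, a_m, x^2)`. -/
theorem stmt_5 {k : Type*} [Field k] {n m : ℕ}
    (x : MvPolynomial (Fin n) k) (a : Fin m → MvPolynomial (Fin n) k)
    (hx : x.IsHomogeneous 1) (ha : ∀ i, (a i).IsHomogeneous 1)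
    (hind : LinearIndependent k (Fin.cons x a : Fin (m + 1) → MvPolynomial (Fin n) k)) :
    Ideal.span ((Set.range fun i => a i * x) ∪ {x ^ 2})
      = Ideal.span {x} ⊓ Ideal.span (Set.range a ∪ {x ^ 2}) := by
  rw [Ideal.span_union, Ideal.span_union, Ideal.span_singleton_inf_sup_span_singleton_sq
    fun p => mem_span_of_mul_mem_of_linearIndependent_cons hx ha hind, Ideal.span_mul_span',
    Set.mul_singleton, ← Set.range_comp]
  rfl
end

section
/- Let S = Q[x, y, z, w] and let I be the ideal of 2×2 minors of the matrix with rows (x, y, z, w) and (-y, x, -w, z). Then I is a nondegenerate prime ideal of height 2 with multiplicity e(S/I) = 2. -/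
open MvPolynomial Filter

/-- The height of an ideal: the infimum of the heights of the primes containing it. -/
noncomputable def idealHeight' (I : Ideal (MvPolynomial (Fin 4) ℚ)) : ℕ∞ :=
  ⨅ P ∈ {P : PrimeSpectrum (MvPolynomial (Fin 4) ℚ) | I ≤ P.asIdeal}, Order.height P

/-- The Hilbert function of `S/I`: `n ↦ dim_ℚ (S/I)_n = dim_ℚ S_n - dim_ℚ I_n`. -/
noncomputable def hilbertFn' (I : Ideal (MvPolynomial (Fin 4) ℚ)) (n : ℕ) : ℕ :=
  Module.finrank ℚ ↥(homogeneousSubmodule (Fin 4) ℚ n)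
    - Module.finrank ℚ ↥(Submodule.restrictScalars ℚ I ⊓ homogeneousSubmodule (Fin 4) ℚ n)

/-!
Over `ℚ(i)` the ideal splits into the two conjugate planes `y = ±ix, w = ±iz`, and the map
`param : (x, y, z, w) ↦ (s, is, t, it)` onto one of them kills `I`. Modulo `I` one has `y² ≡ -x²`,
`w² ≡ -z²`, `yw ≡ -xz` and `xw ≡ yz`, so every monomial reduces to a `ℚ`-combination of the
standard monomials `x^a z^c`, `y x^a z^c`, `w z^c`, whose images `s^a t^c`, `i s^(a+1) t^c`,
`i t^(c+1)` are `ℚ`-linearly independent. Hence `I = ker param` is prime, the standard monomials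
form a basis of `S/I`, and there are `2n + 2` of them in each degree `n ≥ 1`; the linear ones are
`x, y, z, w`, so `I` contains no linear form.

Since `(yz - xw)(yz + xw)` and `(xz + yw)(xz - yw)` lie in `(x² + y², z² + w²)` while
`yz + xw, xz - yw ∉ I`, the prime `I` is minimal over two elements and Krull's height theorem
gives height `≤ 2`; the chain `0 ⊊ ker ((x, y, z, w) ↦ (s, is, t, u)) ⊊ I` gives height `≥ 2`.
-/

theorem MvPolynomial.linearIndependent_monomial {k A σ ι : Type*} [Semiring k] [CommSemiring A]
    [Module k A] {v : ι → A} (hv : LinearIndependent k v) :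
    LinearIndependent k fun p : (σ →₀ ℕ) × ι => monomial p.1 (v p.2) := by
  refine .of_comp (AddMonoidAlgebra.coeffLinearEquiv k).toLinearMap ?_
  convert (Finsupp.linearIndependent_single (fun _ : σ →₀ ℕ => v) fun _ => hv).comp
    (Equiv.sigmaEquivProd _ _).symm (Equiv.injective _) using 1
  ext p : 1
  simp [monomial]

theorem Complex.linearIndependent_one_I : LinearIndependent ℚ ![(1 : ℂ), Complex.I] := by
  simpa using Complex.basisOneI.linearIndependent.restrict_scalars' ℚ

theorem MvPolynomial.finite_homogeneousSubmodule {σ R : Type*} [CommSemiring R] [Finite σ] (n : ℕ) :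
    Module.Finite R (homogeneousSubmodule σ R n) := by
  rw [← homogeneousSubmodule_one_pow, homogeneousSubmodule_one_eq_span_X]
  exact Module.Finite.iff_fg.mpr ((Submodule.fg_span (Set.finite_range _)).pow n)

theorem Ideal.mem_restrictScalars_sup_of_eq_mul_add {R A : Type*} [CommSemiring R] [CommSemiring A]
    [Algebra R A] {J : Ideal A} {W : Submodule R A} {m g t r : A} (hg : g ∈ J)
    (hr : r ∈ J.restrictScalars R ⊔ W) (h : m = g * t + r) : m ∈ J.restrictScalars R ⊔ W :=
  h ▸ add_mem (Submodule.mem_sup_left (J.mul_mem_right t hg)) hr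

theorem MvPolynomial.C_I_sq {σ : Type*} : (C Complex.I : MvPolynomial σ ℂ) ^ 2 = -1 := by
  rw [← C_pow, Complex.I_sq, C_neg, C_1]

noncomputable section

namespace ConjugatePlanes

abbrev S := MvPolynomial (Fin 4) ℚ

def ideal : Ideal S :=
  Ideal.span {X 0 ^ 2 + X 1 ^ 2, X 1 * X 2 - X 0 * X 3, X 0 * X 2 + X 1 * X 3, X 2 ^ 2 + X 3 ^ 2}

def param : S →ₐ[ℚ] MvPolynomial (Fin 2) ℂ :=
  aeval ![X 0, C Complex.I * X 0, X 1, C Complex.I * X 1]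

theorem ideal_le_ker_param : ideal ≤ RingHom.ker param := by
  rw [ideal, Ideal.span_le]
  rintro f (rfl | rfl | rfl | rfl) <;>
    simp only [param, SetLike.mem_coe, RingHom.mem_ker, map_add, map_sub, map_mul, map_pow, aeval_X,
      Matrix.cons_val_zero, Matrix.cons_val_one, Matrix.cons_val]
  · linear_combination X 0 ^ 2 * C_I_sq
  · ring
  · linear_combination X 0 * X 1 * C_I_sq
  · linear_combination X 1 ^ 2 * C_I_sq

def mono (a b c d : ℕ) : S := X 0 ^ a * X 1 ^ b * X 2 ^ c * X 3 ^ d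

theorem mono_mem_homogeneousSubmodule (a b c d : ℕ) :
    mono a b c d ∈ homogeneousSubmodule (Fin 4) ℚ (a + b + c + d) :=
  (((isHomogeneous_X_pow _ a).mul (isHomogeneous_X_pow _ b)).mul
    (isHomogeneous_X_pow _ c)).mul (isHomogeneous_X_pow _ d)

theorem monomial_one_eq_mono (u : Fin 4 →₀ ℕ) :
    monomial u (1 : ℚ) = mono (u 0) (u 1) (u 2) (u 3) := by
  rw [monomial_eq, C_1, one_mul, Finsupp.prod_pow, Fin.prod_univ_four, mono]

abbrev Idx := (ℕ × ℕ) ⊕ (ℕ × ℕ) ⊕ ℕ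

def stdMonomial : Idx → S
  | .inl (a, c) => mono a 0 c 0
  | .inr (.inl (a, c)) => mono a 1 c 0
  | .inr (.inr c) => mono 0 0 c 1

def stdDegree : Idx → ℕ
  | .inl (a, c) => a + c
  | .inr (.inl (a, c)) => a + c + 1
  | .inr (.inr c) => c + 1

theorem stdMonomial_mem_homogeneousSubmodule (j : Idx) :
    stdMonomial j ∈ homogeneousSubmodule (Fin 4) ℚ (stdDegree j) := by
  rcases j with ⟨a, c⟩ | ⟨a, c⟩ | c
  · simpa [stdMonomial, stdDegree] using mono_mem_homogeneousSubmodule a 0 c 0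
  · simpa [stdMonomial, stdDegree, add_right_comm] using mono_mem_homogeneousSubmodule a 1 c 0
  · simpa [stdMonomial, stdDegree] using mono_mem_homogeneousSubmodule 0 0 c 1

-- For `1 ≤ n`, the `2n + 2` standard monomials of degree `n`; for `n = 0` the truncated `n - 1`
-- adds the junk entry `w`.
def stdIndex (n : ℕ) : Fin (n + 1) ⊕ Fin n ⊕ Fin 1 → Idx
  | .inl a => .inl (a, n - a)
  | .inr (.inl a) => .inr (.inl (a, n - 1 - a))
  | .inr (.inr _) => .inr (.inr (n - 1))

theorem stdIndex_injective (n : ℕ) : Function.Injective (stdIndex n) := by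
  rintro (a | a | a) (b | b | b) h <;>
    simp only [stdIndex, Sum.inl.injEq, Sum.inr.injEq, Prod.mk.injEq, reduceCtorEq] at h ⊢ <;> omega

theorem stdDegree_stdIndex {n : ℕ} (hn : 1 ≤ n) (k : Fin (n + 1) ⊕ Fin n ⊕ Fin 1) :
    stdDegree (stdIndex n k) = n := by
  rcases k with a | a | a <;> simp only [stdIndex, stdDegree] <;> omega

theorem mem_range_stdIndex (j : Idx) : j ∈ Set.range (stdIndex (stdDegree j)) := by
  rcases j with ⟨a, c⟩ | ⟨a, c⟩ | c
  · exact ⟨.inl ⟨a, by simp [stdDegree]⟩, by simp [stdIndex, stdDegree]⟩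
  · exact ⟨.inr (.inl ⟨a, by simp [stdDegree]⟩), by simp [stdIndex, stdDegree]⟩
  · exact ⟨.inr (.inr 0), by simp [stdIndex, stdDegree]⟩

def stdSpan : Submodule ℚ S := Submodule.span ℚ (Set.range stdMonomial)

def stdSpanDeg (n : ℕ) : Submodule ℚ S := Submodule.span ℚ (Set.range (stdMonomial ∘ stdIndex n))

theorem stdMonomial_mem_stdSpanDeg (j : Idx) : stdMonomial j ∈ stdSpanDeg (stdDegree j) := by
  obtain ⟨k, hk⟩ := mem_range_stdIndex j
  exact Submodule.subset_span ⟨k, by simp [hk]⟩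

theorem mono_mem_sup_stdSpanDeg (a b c d : ℕ) {n : ℕ} (hn : a + b + c + d = n) :
    mono a b c d ∈ ideal.restrictScalars ℚ ⊔ stdSpanDeg n := by
  have std_mem : ∀ j, stdDegree j = n → stdMonomial j ∈ ideal.restrictScalars ℚ ⊔ stdSpanDeg n :=
    fun j hj => Submodule.mem_sup_right (hj ▸ stdMonomial_mem_stdSpanDeg j)
  match a, b, c, d with
  | a, b + 2, c, d =>
    refine Ideal.mem_restrictScalars_sup_of_eq_mul_add (g := X 0 ^ 2 + X 1 ^ 2)
      (t := mono a b c d) (Ideal.subset_span (by simp))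
      (neg_mem (mono_mem_sup_stdSpanDeg (a + 2) b c d (by omega))) ?_
    simp only [mono]; ring
  | a, b, c, d + 2 =>
    refine Ideal.mem_restrictScalars_sup_of_eq_mul_add (g := X 2 ^ 2 + X 3 ^ 2)
      (t := mono a b c d) (Ideal.subset_span (by simp))
      (neg_mem (mono_mem_sup_stdSpanDeg a b (c + 2) d (by omega))) ?_
    simp only [mono]; ring
  | a, 0, c, 0 => exact std_mem (.inl (a, c)) (by simp only [stdDegree]; omega)
  | a, 1, c, 0 => exact std_mem (.inr (.inl (a, c))) (by simp only [stdDegree]; omega)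
  | 0, 0, c, 1 => exact std_mem (.inr (.inr c)) (by simp only [stdDegree]; omega)
  | a + 1, 0, c, 1 =>
    refine Ideal.mem_restrictScalars_sup_of_eq_mul_add (g := X 1 * X 2 - X 0 * X 3)
      (t := -mono a 0 c 0) (Ideal.subset_span (by simp))
      (mono_mem_sup_stdSpanDeg a 1 (c + 1) 0 (by omega)) ?_
    simp only [mono]; ring
  | a, 1, c, 1 =>
    refine Ideal.mem_restrictScalars_sup_of_eq_mul_add (g := X 0 * X 2 + X 1 * X 3)
      (t := mono a 0 c 0) (Ideal.subset_span (by simp))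
      (neg_mem (mono_mem_sup_stdSpanDeg (a + 1) 0 (c + 1) 0 (by omega))) ?_
    simp only [mono]; ring
termination_by 2 * d + b

theorem homogeneousSubmodule_le_sup_stdSpanDeg (n : ℕ) :
    homogeneousSubmodule (Fin 4) ℚ n ≤ ideal.restrictScalars ℚ ⊔ stdSpanDeg n := by
  rw [homogeneousSubmodule_eq_finsupp_supported, AddMonoidAlgebra.supported_eq_span_single,
    Submodule.span_le]
  rintro _ ⟨u, hu, rfl⟩
  dsimp only
  rw [SetLike.mem_coe, single_eq_monomial, monomial_one_eq_mono]
  refine mono_mem_sup_stdSpanDeg _ _ _ _ ?_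
  rw [← Set.mem_ofPred.mp hu, Finsupp.degree_eq_sum, Fin.sum_univ_four]

theorem stdSpanDeg_le_stdSpan (n : ℕ) : stdSpanDeg n ≤ stdSpan :=
  Submodule.span_mono (Set.range_comp_subset_range _ _)

theorem sup_stdSpan_eq_top : ideal.restrictScalars ℚ ⊔ stdSpan = ⊤ := by
  refine eq_top_iff.mpr fun f _ => ?_
  rw [← sum_homogeneousComponent f]
  refine Submodule.sum_mem _ fun n _ => ?_
  exact sup_le_sup_left (stdSpanDeg_le_stdSpan n) _
    (homogeneousSubmodule_le_sup_stdSpanDeg n (homogeneousComponent_mem n f))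

def exps (a c : ℕ) : Fin 2 →₀ ℕ := Finsupp.single 0 a + Finsupp.single 1 c

theorem exps_inj {a c a' c' : ℕ} : exps a c = exps a' c' ↔ a = a' ∧ c = c' := by
  refine ⟨fun h => ⟨?_, ?_⟩, fun h => h.1 ▸ h.2 ▸ rfl⟩
  · simpa [exps] using DFunLike.congr_fun h 0
  · simpa [exps] using DFunLike.congr_fun h 1

theorem monomial_exps (a c : ℕ) (r : ℂ) :
    monomial (exps a c) r = C r * (X 0 ^ a * X 1 ^ c) := by
  simp only [exps, X_pow_eq_monomial, monomial_mul, C_mul_monomial, mul_one]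

/-- The exponent and the coefficient (`1` or `i`) of the image of a standard monomial. -/
def stdImage : Idx → (Fin 2 →₀ ℕ) × Fin 2
  | .inl (a, c) => (exps a c, 0)
  | .inr (.inl (a, c)) => (exps (a + 1) c, 1)
  | .inr (.inr c) => (exps 0 (c + 1), 1)

theorem stdImage_injective : Function.Injective stdImage := by
  rintro (⟨a, c⟩ | ⟨a, c⟩ | c) (⟨a', c'⟩ | ⟨a', c'⟩ | c') h <;>
    simp only [stdImage, Prod.mk.injEq, exps_inj, Sum.inl.injEq, Sum.inr.injEq, reduceCtorEq,
      zero_ne_one, one_ne_zero, and_false, and_true, false_and, true_and] at h ⊢ <;> omega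

theorem param_stdMonomial (j : Idx) :
    param (stdMonomial j) = monomial (stdImage j).1 (![1, Complex.I] (stdImage j).2) := by
  rcases j with ⟨a, c⟩ | ⟨a, c⟩ | c <;>
    simp only [param, stdMonomial, mono, stdImage, map_mul, map_pow, aeval_X, pow_zero, pow_one,
      mul_one, one_mul, C_1, Matrix.cons_val_zero, Matrix.cons_val_one, Matrix.cons_val,
      Matrix.cons_val_fin_one, monomial_exps] <;> ring

theorem linearIndependent_param_stdMonomial : LinearIndependent ℚ (param ∘ stdMonomial) := by
  convert (linearIndependent_monomial Complex.linearIndependent_one_I).comp _ stdImage_injective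
  exact funext param_stdMonomial

theorem disjoint_stdSpan_ker_param : Disjoint stdSpan (LinearMap.ker param.toLinearMap) :=
  Submodule.range_ker_disjoint linearIndependent_param_stdMonomial

theorem ker_param : RingHom.ker param = ideal := by
  refine le_antisymm (fun f hf => ?_) ideal_le_ker_param
  have hf' : f ∈ ideal.restrictScalars ℚ ⊔ stdSpan := sup_stdSpan_eq_top ▸ Submodule.mem_top
  obtain ⟨g, hg, v, hv, rfl⟩ := Submodule.mem_sup.mp hf'
  have hg0 : param g = 0 := ideal_le_ker_param hg
  have hv0 : v ∈ LinearMap.ker param.toLinearMap := by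
    simpa [RingHom.mem_ker, hg0] using hf
  rw [Submodule.disjoint_def.mp disjoint_stdSpan_ker_param v hv hv0, add_zero]
  exact hg

theorem isPrime_ideal : ideal.IsPrime := ker_param ▸ RingHom.ker_isPrime _

theorem disjoint_ideal_stdSpan : Disjoint (ideal.restrictScalars ℚ) stdSpan :=
  disjoint_stdSpan_ker_param.symm.mono_left fun _ hf => ideal_le_ker_param hf

theorem linearIndependent_stdMonomial : LinearIndependent ℚ stdMonomial :=
  linearIndependent_param_stdMonomial.of_comp param.toLinearMap

theorem finrank_stdSpanDeg (n : ℕ) : Module.finrank ℚ (stdSpanDeg n) = 2 * n + 2 := by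
  rw [stdSpanDeg,
    finrank_span_eq_card (linearIndependent_stdMonomial.comp _ (stdIndex_injective n))]
  simp only [Fintype.card_sum, Fintype.card_fin]
  ring

theorem stdSpanDeg_le_homogeneousSubmodule {n : ℕ} (hn : 1 ≤ n) :
    stdSpanDeg n ≤ homogeneousSubmodule (Fin 4) ℚ n := by
  rw [stdSpanDeg, Submodule.span_le]
  rintro _ ⟨k, rfl⟩
  simpa [stdDegree_stdIndex hn] using stdMonomial_mem_homogeneousSubmodule (stdIndex n k)

theorem finrank_homogeneousSubmodule_eq_add {n : ℕ} (hn : 1 ≤ n) :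
    Module.finrank ℚ (homogeneousSubmodule (Fin 4) ℚ n) =
      Module.finrank ℚ ↥(ideal.restrictScalars ℚ ⊓ homogeneousSubmodule (Fin 4) ℚ n) +
        (2 * n + 2) := by
  set Sn := homogeneousSubmodule (Fin 4) ℚ n
  have hle := stdSpanDeg_le_homogeneousSubmodule hn
  have hsup : ideal.restrictScalars ℚ ⊓ Sn ⊔ stdSpanDeg n = Sn := by
    refine le_antisymm (sup_le inf_le_right hle) fun f hf => ?_
    obtain ⟨g, hg, v, hv, rfl⟩ := Submodule.mem_sup.mp (homogeneousSubmodule_le_sup_stdSpanDeg n hf)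
    have hgS : g ∈ Sn := by simpa using Sn.sub_mem hf (hle hv)
    exact Submodule.add_mem_sup ⟨hg, hgS⟩ hv
  have hinf : ideal.restrictScalars ℚ ⊓ Sn ⊓ stdSpanDeg n = ⊥ :=
    (disjoint_ideal_stdSpan.mono inf_le_left (stdSpanDeg_le_stdSpan n)).eq_bot
  have : Module.Finite ℚ Sn := finite_homogeneousSubmodule n
  have : Module.Finite ℚ (stdSpanDeg n) := Submodule.finiteDimensional_of_le hle
  have := Submodule.finrank_sup_add_finrank_inf_eq (ideal.restrictScalars ℚ ⊓ Sn) (stdSpanDeg n)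
  rw [hsup, hinf, finrank_bot, finrank_stdSpanDeg] at this
  omega

theorem hilbertFn'_ideal {n : ℕ} (hn : 1 ≤ n) : hilbertFn' ideal n = 2 * n + 2 := by
  rw [hilbertFn', finrank_homogeneousSubmodule_eq_add hn]
  exact Nat.add_sub_cancel_left _ _

theorem eq_zero_of_mem_ideal_of_isHomogeneous_one {f : S} (hf : f ∈ ideal)
    (h1 : f.IsHomogeneous 1) : f = 0 := by
  have hX : homogeneousSubmodule (Fin 4) ℚ 1 ≤ stdSpan := by
    rw [homogeneousSubmodule_one_eq_span_X, Submodule.span_le]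
    rintro _ ⟨i, rfl⟩
    obtain ⟨j, hj⟩ : ∃ j, stdMonomial j = X i := by
      fin_cases i
      exacts [⟨.inl (1, 0), by simp [stdMonomial, mono]⟩,
        ⟨.inr (.inl (0, 0)), by simp [stdMonomial, mono]⟩,
        ⟨.inl (0, 1), by simp [stdMonomial, mono]⟩, ⟨.inr (.inr 0), by simp [stdMonomial, mono]⟩]
    exact Submodule.subset_span ⟨j, hj⟩
  exact Submodule.disjoint_def.mp disjoint_ideal_stdSpan f hf (hX h1)

theorem idealHeight'_eq_height (p : Ideal S) [hp : p.IsPrime] : idealHeight' p = p.height := by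
  rw [idealHeight']
  refine le_antisymm ?_ (le_iInf₂ fun P hP => ?_)
  · exact (iInf₂_le (⟨p, hp⟩ : PrimeSpectrum S) (le_refl p)).trans_eq
      (PrimeSpectrum.height_eq_orderHeight ⟨p, hp⟩).symm
  · exact (Ideal.height_mono hP).trans_eq P.height_eq_orderHeight

theorem notMem_ideal_of_eval_param_ne_zero {f : S} (h : eval (fun _ => 1) (param f) ≠ 0) :
    f ∉ ideal :=
  fun hf => h (by rw [ideal_le_ker_param hf, map_zero])

theorem ideal_mem_minimalPrimes :
    ideal ∈ (Ideal.span {X 0 ^ 2 + X 1 ^ 2, X 2 ^ 2 + X 3 ^ 2}).minimalPrimes := by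
  refine ⟨⟨isPrime_ideal, Ideal.span_le.mpr ?_⟩, fun q ⟨hq, hspan⟩ hqI => ?_⟩
  · rintro f (rfl | rfl) <;> exact Ideal.subset_span (by simp)
  have hA : X 0 ^ 2 + X 1 ^ 2 ∈ q := hspan (Ideal.subset_span (by simp))
  have hE : X 2 ^ 2 + X 3 ^ 2 ∈ q := hspan (Ideal.subset_span (by simp))
  have hB : X 1 * X 2 - X 0 * X 3 ∈ q := by
    have : (X 1 * X 2 - X 0 * X 3) * (X 1 * X 2 + X 0 * X 3) ∈ q := by
      convert q.sub_mem (q.mul_mem_left (X 2 ^ 2) hA) (q.mul_mem_left (X 0 ^ 2) hE) using 1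
      ring
    refine (hq.mem_or_mem this).resolve_right fun h => notMem_ideal_of_eval_param_ne_zero ?_ (hqI h)
    simp [param]
  have hC : X 0 * X 2 + X 1 * X 3 ∈ q := by
    have : (X 0 * X 2 + X 1 * X 3) * (X 0 * X 2 - X 1 * X 3) ∈ q := by
      convert q.sub_mem (q.mul_mem_left (X 2 ^ 2) hA) (q.mul_mem_left (X 1 ^ 2) hE) using 1
      ring
    refine (hq.mem_or_mem this).resolve_right fun h => notMem_ideal_of_eval_param_ne_zero ?_ (hqI h)
    simp [param]
  rw [ideal, Ideal.span_le]
  rintro f (rfl | rfl | rfl | rfl) <;> assumption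

theorem height_ideal_le_two : ideal.height ≤ 2 := by
  classical
  refine (Ideal.height_le_card_of_mem_minimalPrimes_span_finset
    (s := {X 0 ^ 2 + X 1 ^ 2, X 2 ^ 2 + X 3 ^ 2}) (by simpa using ideal_mem_minimalPrimes)).trans ?_
  exact_mod_cast Finset.card_le_two

/-- The hypersurface `y = i x`, which contains the plane parametrised by `param`. -/
def paramHypersurface : S →ₐ[ℚ] MvPolynomial (Fin 3) ℂ :=
  aeval ![X 0, C Complex.I * X 0, X 1, X 2]

theorem bot_lt_ker_paramHypersurface : ⊥ < RingHom.ker paramHypersurface := by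
  refine bot_lt_iff_ne_bot.mpr fun h => ?_
  have hmem : X 0 ^ 2 + X 1 ^ 2 ∈ RingHom.ker paramHypersurface := by
    simp only [paramHypersurface, RingHom.mem_ker, map_add, map_pow, aeval_X,
      Matrix.cons_val_zero, Matrix.cons_val_one]
    linear_combination X 0 ^ 2 * C_I_sq
  rw [h, Ideal.mem_bot] at hmem
  simpa using congrArg (eval ![1, 0, 0, 0]) hmem

theorem ker_paramHypersurface_lt_ideal : RingHom.ker paramHypersurface < ideal := by
  have hparam : param = ((aeval ![X 0, X 1, C Complex.I * X 1] :
      MvPolynomial (Fin 3) ℂ →ₐ[ℂ] _).restrictScalars ℚ).comp paramHypersurface := by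
    refine algHom_ext fun i => ?_
    fin_cases i <;> simp [param, paramHypersurface]
  refine lt_of_le_of_ne (fun f hf => ?_) fun h => ?_
  · rw [← ker_param, RingHom.mem_ker, hparam]
    simp [(RingHom.mem_ker).mp hf]
  · have hmem : X 2 ^ 2 + X 3 ^ 2 ∈ RingHom.ker paramHypersurface := h ▸ Ideal.subset_span (by simp)
    rw [RingHom.mem_ker] at hmem
    simpa [paramHypersurface] using congrArg (eval ![0, 1, 0]) hmem

theorem two_le_height_ideal : 2 ≤ ideal.height := by
  have := RingHom.ker_isPrime paramHypersurface
  have := isPrime_ideal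
  have h1 := Ideal.height_add_one_le_of_lt_of_isPrime bot_lt_ker_paramHypersurface
  have h2 := Ideal.height_add_one_le_of_lt_of_isPrime ker_paramHypersurface_lt_ideal
  calc (2 : ℕ∞) = (⊥ : Ideal S).height + 1 + 1 := by rw [Ideal.height_bot]; norm_num
    _ ≤ (RingHom.ker paramHypersurface).height + 1 := by gcongr
    _ ≤ ideal.height := h2

def minorMatrix : Matrix (Fin 2) (Fin 4) S :=
  Matrix.of ![![X 0, X 1, X 2, X 3], ![-X 1, X 0, -X 3, X 2]]

theorem span_minors_minorMatrix :
    Ideal.span {d | ∃ i j : Fin 4, i < j ∧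
      d = minorMatrix 0 i * minorMatrix 1 j - minorMatrix 0 j * minorMatrix 1 i} = ideal := by
  have mem_of_eq : ∀ g ∈ ({X 0 ^ 2 + X 1 ^ 2, X 1 * X 2 - X 0 * X 3, X 0 * X 2 + X 1 * X 3,
      X 2 ^ 2 + X 3 ^ 2} : Set S), ∀ f, (f = g ∨ f = -g) → f ∈ ideal := by
    rintro g hg f (rfl | rfl)
    exacts [Ideal.subset_span hg, neg_mem (Ideal.subset_span hg)]
  refine le_antisymm (Ideal.span_le.mpr ?_) (Ideal.span_le.mpr ?_)
  · rintro _ ⟨i, j, hij, rfl⟩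
    fin_cases i <;> fin_cases j <;> try exact absurd hij (by decide)
    · exact mem_of_eq (X 0 ^ 2 + X 1 ^ 2) (by simp) _ (.inl (by simp [minorMatrix]; ring))
    · exact mem_of_eq (X 1 * X 2 - X 0 * X 3) (by simp) _ (.inl (by simp [minorMatrix]; ring))
    · exact mem_of_eq (X 0 * X 2 + X 1 * X 3) (by simp) _ (.inl (by simp [minorMatrix]; ring))
    · exact mem_of_eq (X 0 * X 2 + X 1 * X 3) (by simp) _ (.inr (by simp [minorMatrix]; ring))
    · exact mem_of_eq (X 1 * X 2 - X 0 * X 3) (by simp) _ (.inl (by simp [minorMatrix]; ring))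
    · exact mem_of_eq (X 2 ^ 2 + X 3 ^ 2) (by simp) _ (.inl (by simp [minorMatrix]; ring))
  · rintro f (rfl | rfl | rfl | rfl) <;> refine Ideal.subset_span ?_
    exacts [⟨0, 1, by decide, by simp [minorMatrix]; ring⟩,
      ⟨0, 2, by decide, by simp [minorMatrix]; ring⟩, ⟨0, 3, by decide, by simp [minorMatrix]; ring⟩,
      ⟨2, 3, by decide, by simp [minorMatrix]; ring⟩]

end ConjugatePlanes

end

/-- in `S = ℚ[x,y,z,w]`, the ideal `I` of 2×2 minors of the matrix with rows
`(x, y, z, w)` and `(-y, x, -w, z)` is a nondegenerate prime ideal of height 2 with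
multiplicity `e(S/I) = 2` (i.e. `S/I` has dimension 2, so its Hilbert polynomial has
degree 1, and its leading coefficient is `2/1! = 2`). -/
theorem stmt_17 (x y z w : MvPolynomial (Fin 4) ℚ)
    (hx : x = X 0) (hy : y = X 1) (hz : z = X 2) (hw : w = X 3)
    (M : Matrix (Fin 2) (Fin 4) (MvPolynomial (Fin 4) ℚ))
    (hM : M = Matrix.of ![![x, y, z, w], ![-y, x, -w, z]])
    (I : Ideal (MvPolynomial (Fin 4) ℚ))
    (hI : I = Ideal.span {d | ∃ i j : Fin 4, i < j ∧ d = M 0 i * M 1 j - M 0 j * M 1 i}) :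
    I.IsPrime ∧
    (∀ f ∈ I, f.IsHomogeneous 1 → f = 0) ∧
    idealHeight' I = 2 ∧
    ∃ p : Polynomial ℚ,
      (∀ᶠ n : ℕ in atTop, (hilbertFn' I n : ℚ) = p.eval (n : ℚ)) ∧
      p.natDegree = 1 ∧ p.leadingCoeff = 2 := by
  obtain rfl : I = ConjugatePlanes.ideal := by
    rw [hI, hM, hx, hy, hz, hw]
    exact ConjugatePlanes.span_minors_minorMatrix
  have hprime := ConjugatePlanes.isPrime_ideal
  refine ⟨hprime, fun f hf => ConjugatePlanes.eq_zero_of_mem_ideal_of_isHomogeneous_one hf, ?_,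
    Polynomial.C 2 * Polynomial.X + Polynomial.C 2, ?_, Polynomial.natDegree_linear two_ne_zero,
    Polynomial.leadingCoeff_linear two_ne_zero⟩
  · rw [ConjugatePlanes.idealHeight'_eq_height]
    exact le_antisymm ConjugatePlanes.height_ideal_le_two ConjugatePlanes.two_le_height_ideal
  · refine eventually_atTop.mpr ⟨1, fun n hn => ?_⟩
    rw [ConjugatePlanes.hilbertFn'_ideal hn]
    simp
end
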